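/- Let ω_0 = 1 + η/s² and ω_1 = T_s(ω_0)/T_s'(ω_0). Then for each fixed η ≥ 0, s² ω_1 converges as s → ∞ to √(2η)/tanh(√(2η)) (interpreted as 1 when η = 0). -/

import Mathlib

open Polynomial Polynomial.Chebyshev Filter
open scoped Topology

lemma T_cosh (n : ℤ) (t : ℝ) : (T ℝ n).eval (Real.cosh t) = Real.cosh (n * t) := by
  have h := T_complex_cos ((t : ℂ) * Complex.I) n
  rw [Complex.cos_mul_I] at h
  have h2 : (n : ℂ) * ((t : ℂ) * Complex.I) = ((n * t : ℝ) : ℂ) * Complex.I := by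
    push_cast; ring
  rw [h2, Complex.cos_mul_I] at h
  have := complex_ofReal_eval_T (Real.cosh t) n
  rw [Complex.ofReal_cosh, h, ← Complex.ofReal_cosh] at this
  exact_mod_cast this

lemma U_sinh (n : ℤ) (t : ℝ) :
    (U ℝ n).eval (Real.cosh t) * Real.sinh t = Real.sinh ((n + 1) * t) := by
  have h := U_complex_cos ((t : ℂ) * Complex.I) n
  rw [Complex.cos_mul_I, Complex.sin_mul_I] at h
  have h2 : ((n : ℂ) + 1) * ((t : ℂ) * Complex.I) = (((n + 1 : ℤ) * t : ℝ) : ℂ) * Complex.I := by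
    push_cast; ring
  rw [h2, Complex.sin_mul_I] at h
  have h3 : ((((U ℝ n).eval (Real.cosh t) * Real.sinh t : ℝ)) : ℂ) * Complex.I
      = ((Real.sinh ((n+1) * t) : ℝ) : ℂ) * Complex.I := by
    push_cast [← complex_ofReal_eval_U, ← Complex.ofReal_cosh, ← Complex.ofReal_sinh]
    rw [complex_ofReal_eval_U, Complex.ofReal_cosh, mul_assoc]
    convert h using 3
    rw [← Complex.ofReal_sinh]
    norm_cast
  have := mul_right_cancel₀ Complex.I_ne_zero h3
  exact_mod_cast this

lemma derivT_sinh (n : ℤ) (t : ℝ) :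
    (derivative (T ℝ n)).eval (Real.cosh t) * Real.sinh t = n * Real.sinh (n * t) := by
  rw [T_derivative_eq_U]
  have := U_sinh (n - 1) t
  simp only [Int.cast_sub, Int.cast_one, sub_add_cancel] at this
  rw [eval_mul, mul_assoc, this]
  simp

lemma U_eval_one (k : ℕ) : (U ℝ (k : ℤ)).eval 1 = k + 1 := by
  induction k using Nat.twoStepInduction with
  | zero => simp [U_zero]
  | one => norm_num [U_one]
  | more n ih1 ih2 =>
    have h : ((n + 2 : ℕ) : ℤ) = (n : ℤ) + 2 := by push_cast; ring
    rw [h, U_add_two]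
    have h1 : ((n + 1 : ℕ) : ℤ) = (n : ℤ) + 1 := by push_cast; ring
    rw [h1] at ih2
    simp only [eval_sub, eval_mul, eval_ofNat, eval_X, ih1, ih2]
    push_cast; ring

theorem omega1_limit (η : ℝ) (hη : 0 ≤ η) :
    Tendsto (fun s : ℕ =>
        (s : ℝ) ^ 2 * ((T ℝ s).eval (1 + η / (s : ℝ) ^ 2) /
          (derivative (T ℝ s)).eval (1 + η / (s : ℝ) ^ 2))) atTop
      (nhds (if η = 0 then 1 else Real.sqrt (2 * η) / Real.tanh (Real.sqrt (2 * η)))) := by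
  rcases eq_or_lt_of_le hη with h0 | hpos
  · -- η = 0
    rw [if_pos h0.symm]
    apply tendsto_const_nhds.congr'
    filter_upwards [eventually_ge_atTop 1] with s hs
    have hs0 : (s : ℝ) ≠ 0 := by positivity
    have hx : 1 + η / (s : ℝ) ^ 2 = 1 := by rw [← h0]; simp
    have hT : (T ℝ (s : ℤ)).eval 1 = 1 := by
      have := T_cosh (s : ℤ) 0
      simpa using this
    have hD : (derivative (T ℝ (s : ℤ))).eval 1 = (s : ℝ) ^ 2 := by
      rw [T_derivative_eq_U, eval_mul]
      have h1 : ((s : ℤ) - 1) = ((s - 1 : ℕ) : ℤ) := by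
        have : 1 ≤ s := hs
        omega
      rw [h1, _root_.U_eval_one]
      have h2 : ((s - 1 : ℕ) : ℝ) + 1 = (s : ℝ) := by
        have : 1 ≤ s := hs
        push_cast [this]
        ring
      simp [h2]
      ring
    rw [hx, hT, hD]
    field_simp
  · -- η > 0
    rw [if_neg hpos.ne']
    set c := Real.sqrt (2 * η) with hc_def
    have hc : 0 < c := Real.sqrt_pos.mpr (by linarith)
    set y : ℕ → ℝ := fun s => Real.sqrt ((1 + η / (s : ℝ) ^ 2) ^ 2 - 1) with hy_def
    set t : ℕ → ℝ := fun s => Real.arsinh (y s) with ht_def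
    have hsq : Tendsto (fun s : ℕ => (s : ℝ) ^ 2) atTop atTop :=
      (tendsto_pow_atTop two_ne_zero).comp tendsto_natCast_atTop_atTop
    have l1 : Tendsto (fun s : ℕ => η / (s : ℝ) ^ 2) atTop (nhds 0) :=
      tendsto_const_nhds.div_atTop hsq
    have l2 : Tendsto (fun s : ℕ => η ^ 2 / (s : ℝ) ^ 2) atTop (nhds 0) :=
      tendsto_const_nhds.div_atTop hsq
    have hy0 : Tendsto y atTop (nhds 0) := by
      have h1 : Tendsto (fun s : ℕ => (1 + η / (s : ℝ) ^ 2) ^ 2 - 1) atTop (nhds 0) := by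
        have := ((l1.const_add 1).pow 2).sub_const 1
        norm_num at this
        exact this
      have := (Real.continuous_sqrt.tendsto 0).comp h1
      rw [Real.sqrt_zero] at this; exact this
    have ht0 : Tendsto t atTop (nhds 0) := by
      have := (Real.continuous_arsinh.tendsto 0).comp hy0
      rw [Real.arsinh_zero] at this; exact this
    -- positivity facts for s ≥ 1
    have key : ∀ s : ℕ, 1 ≤ s → 0 < y s ∧ 0 < t s ∧ Real.sinh (t s) = y s ∧
        Real.cosh (t s) = 1 + η / (s : ℝ) ^ 2 := by
      intro s hs
      have hs0 : (0 : ℝ) < (s : ℝ) := by exact_mod_cast hs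
      have hx1 : (1 : ℝ) < 1 + η / (s : ℝ) ^ 2 := by
        have : 0 < η / (s : ℝ) ^ 2 := by positivity
        linarith
      have hypos : 0 < y s := Real.sqrt_pos.mpr (by nlinarith)
      have hsinh : Real.sinh (t s) = y s := Real.sinh_arsinh _
      have hcosh : Real.cosh (t s) = 1 + η / (s : ℝ) ^ 2 := by
        rw [ht_def]
        simp only [Real.cosh_arsinh]
        rw [hy_def]
        rw [Real.sq_sqrt (by nlinarith)]
        have : 1 + ((1 + η / (s : ℝ) ^ 2) ^ 2 - 1) = (1 + η / (s : ℝ) ^ 2) ^ 2 := by ring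
        rw [this, Real.sqrt_sq (by linarith)]
      have htpos : 0 < t s := Real.sinh_pos_iff.mp (hsinh ▸ hypos)
      exact ⟨hypos, htpos, hsinh, hcosh⟩
    have hA : Tendsto (fun s : ℕ => (s : ℝ) * Real.sinh (t s)) atTop (nhds c) := by
      have lim : Tendsto (fun s : ℕ => Real.sqrt (2 * η + η ^ 2 / (s : ℝ) ^ 2)) atTop (nhds c) := by
        have h1 : Tendsto (fun s : ℕ => 2 * η + η ^ 2 / (s : ℝ) ^ 2) atTop (nhds (2 * η)) := by
          simpa using l2.const_add (2 * η)
        exact (Real.continuous_sqrt.tendsto (2 * η)).comp h1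
      apply lim.congr'
      filter_upwards [eventually_ge_atTop 1] with s hs
      obtain ⟨hypos, htpos, hsinh, hcosh⟩ := key s hs
      have hs0 : (0 : ℝ) < (s : ℝ) := by exact_mod_cast hs
      rw [hsinh, hy_def]
      rw [← Real.sqrt_sq hs0.le, ← Real.sqrt_mul (by positivity)]
      congr 1
      field_simp
      rw [Real.sq_sqrt (by positivity)]
      ring
    have hslope : Tendsto (fun s : ℕ => Real.sinh (t s) / t s) atTop (nhds 1) := by
      have hd := Real.hasDerivAt_sinh 0
      rw [hasDerivAt_iff_tendsto_slope] at hd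
      have htne : Tendsto t atTop (𝓝[≠] (0:ℝ)) := by
        rw [tendsto_nhdsWithin_iff]
        refine ⟨ht0, ?_⟩
        filter_upwards [eventually_ge_atTop 1] with s hs
        exact (key s hs).2.1.ne'
      have := hd.comp htne
      simp only [Real.cosh_zero] at this
      apply this.congr
      intro s
      simp [slope_def_field, Real.sinh_zero]
    have hinv : Tendsto (fun s : ℕ => t s / Real.sinh (t s)) atTop (nhds 1) := by
      have := hslope.inv₀ one_ne_zero
      simpa [inv_div] using this
    have hD : Tendsto (fun s : ℕ => (s : ℝ) * t s) atTop (nhds c) := by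
      have := hA.mul hinv
      rw [mul_one] at this
      apply this.congr'
      filter_upwards [eventually_ge_atTop 1] with s hs
      obtain ⟨hypos, htpos, hsinh, hcosh⟩ := key s hs
      have hsne : Real.sinh (t s) ≠ 0 := by rw [hsinh]; exact hypos.ne'
      field_simp
    have hE : Tendsto (fun s : ℕ => Real.cosh ((s : ℝ) * t s) / Real.sinh ((s : ℝ) * t s))
        atTop (nhds (Real.cosh c / Real.sinh c)) := by
      exact ((Real.continuous_cosh.tendsto c).comp hD).div
        ((Real.continuous_sinh.tendsto c).comp hD) (Real.sinh_pos_iff.mpr hc).ne'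
    have hfinal := hA.mul hE
    have hval : c * (Real.cosh c / Real.sinh c) = c / Real.tanh c := by
      rw [Real.tanh_eq_sinh_div_cosh]
      have h1 : Real.sinh c ≠ 0 := (Real.sinh_pos_iff.mpr hc).ne'
      have h2 : Real.cosh c ≠ 0 := (Real.cosh_pos c).ne'
      field_simp
    rw [hval] at hfinal
    apply hfinal.congr'
    filter_upwards [eventually_ge_atTop 1] with s hs
    obtain ⟨hypos, htpos, hsinh, hcosh⟩ := key s hs
    have hs0 : (0 : ℝ) < (s : ℝ) := by exact_mod_cast hs
    have hstpos : 0 < (s : ℝ) * t s := by positivity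
    have hsinh_st : 0 < Real.sinh ((s : ℝ) * t s) := Real.sinh_pos_iff.mpr hstpos
    have hT : (T ℝ (s : ℤ)).eval (1 + η / (s : ℝ) ^ 2) = Real.cosh ((s : ℝ) * t s) := by
      rw [← hcosh, T_cosh]
      norm_num
    have hder : (derivative (T ℝ (s : ℤ))).eval (1 + η / (s : ℝ) ^ 2)
        = (s : ℝ) * Real.sinh ((s : ℝ) * t s) / Real.sinh (t s) := by
      rw [eq_div_iff (hsinh ▸ hypos.ne' : Real.sinh (t s) ≠ 0)]
      have := derivT_sinh (s : ℤ) (t s)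
      rw [hcosh] at this
      rw [this]
      norm_num
    rw [hT, hder]
    have hne1 : Real.sinh (t s) ≠ 0 := hsinh ▸ hypos.ne'
    field_simp
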